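/- Let f : [0,∞) × ℂ^d → ℂ^d be continuous and globally Lipschitz in the second variable, and let α ∈ (0,1]^d, x₀ ∈ ℂ^d. Then the initial value problem given by the Volterra system x_i(t) = x_i⁰ + (1/Γ(α_i)) ∫₀ᵗ (t−s)^{α_i−1} f_i(s, x(s)) ds has a unique solution in C([0,∞); ℂ^d). -/

import Mathlib

/-!
Write `I^a g (t) = Γ(a)⁻¹ ∫₀ᵗ (t - s)^(a-1) g(s) ds` and
`P x = x₀ + (I^{α_i} f_i(·, x(·)))_i`. Since
`∫₀ᵗ (t - s)^(a-1) e^{λ s} ds ≤ Γ(a) λ^(-a) e^{λ t}`, a bound `‖u - v‖ ≤ B e^{λ s}` on `[0, t]`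
gives `‖P u t - P v t‖ ≤ L λ^(-α_i) B e^{λ t}`: for `λ` large, `P` halves the Bielecki
seminorm `sup_{s ≤ t} e^{-λ s} ‖u s‖` on every `[0, t]`, with one `λ` for all `t`.
Hence the Picard iterates converge geometrically, uniformly on each `[0, T]`, to a continuous
fixed point, and two continuous fixed points agree since their Bielecki distance is at most
half of itself. `P` preserves continuity because for `0 < a ≤ 1` and `‖g‖ ≤ M` on `[0, T]`,
`t ↦ ∫₀ᵗ (t - s)^(a-1) g(s) ds` is Hölder continuous of exponent `a` there.
-/

open MeasureTheory Set Real Filter Topology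

section Kernel

variable {E : Type*} [NormedAddCommGroup E] [NormedSpace ℝ E]

theorem intervalIntegrable_sub_rpow {a : ℝ} (ha : -1 < a) (t u v : ℝ) :
    IntervalIntegrable (fun s => (t - s) ^ a) volume u v := by
  simpa using
    (intervalIntegral.intervalIntegrable_rpow' (a := t - u) (b := t - v) ha).comp_sub_left t

theorem intervalIntegrable_sub_rpow_smul {a : ℝ} (ha : -1 < a) (t : ℝ) {u v : ℝ} {g : ℝ → E}
    (hg : ContinuousOn g (uIcc u v)) :
    IntervalIntegrable (fun s => (t - s) ^ a • g s) volume u v :=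
  (intervalIntegrable_sub_rpow ha t u v).smul_continuousOn hg

theorem integral_sub_rpow {a : ℝ} (ha : -1 < a) (t u v : ℝ) :
    ∫ s in u..v, (t - s) ^ a = ((t - u) ^ (a + 1) - (t - v) ^ (a + 1)) / (a + 1) := by
  rw [intervalIntegral.integral_comp_sub_left (fun x => x ^ a) t, integral_rpow (Or.inl ha)]

variable {a M t t' : ℝ} {g : ℝ → E}

theorem norm_integral_sub_rpow_smul_le (ha : 0 < a) (htt : t' ≤ t)
    (hM : ∀ s ∈ Icc t' t, ‖g s‖ ≤ M) :
    ‖∫ s in t'..t, (t - s) ^ (a - 1) • g s‖ ≤ M * (t - t') ^ a / a := by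
  have hbound : ∀ᵐ s, s ∈ Ioc t' t → ‖(t - s) ^ (a - 1) • g s‖ ≤ (t - s) ^ (a - 1) * M :=
    ae_of_all _ fun s hs => by
      rw [norm_smul, norm_of_nonneg (rpow_nonneg (by linarith [hs.2]) _)]
      exact mul_le_mul_of_nonneg_left (hM s (Ioc_subset_Icc_self hs))
        (rpow_nonneg (by linarith [hs.2]) _)
  refine (intervalIntegral.norm_integral_le_of_norm_le htt hbound
    ((intervalIntegrable_sub_rpow (by linarith) t t' t).mul_const M)).trans_eq ?_
  rw [intervalIntegral.integral_mul_const, integral_sub_rpow (by linarith)]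
  simp [zero_rpow ha.ne']
  ring

-- For `a ≤ 1` the kernel `(t - s) ^ (a - 1)` decreases in `t`, so the integrand has a sign.
theorem norm_integral_rpow_sub_rpow_smul_le (ha : 0 < a) (ha1 : a ≤ 1) (ht' : 0 ≤ t')
    (htt : t' ≤ t) (hM : ∀ s ∈ Icc 0 t', ‖g s‖ ≤ M) :
    ‖∫ s in (0 : ℝ)..t', ((t - s) ^ (a - 1) - (t' - s) ^ (a - 1)) • g s‖ ≤
      M * (t - t') ^ a / a := by
  have hM0 : 0 ≤ M := (norm_nonneg _).trans (hM 0 ⟨le_rfl, ht'⟩)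
  have hbound : ∀ᵐ s, s ∈ Ioc 0 t' →
      ‖((t - s) ^ (a - 1) - (t' - s) ^ (a - 1)) • g s‖ ≤
        ((t' - s) ^ (a - 1) - (t - s) ^ (a - 1)) * M := by
    filter_upwards [volume.ae_ne t'] with s hst' hs
    have hpos : 0 < t' - s := sub_pos.2 (lt_of_le_of_ne hs.2 hst')
    have hmono : (t - s) ^ (a - 1) ≤ (t' - s) ^ (a - 1) :=
      rpow_le_rpow_of_nonpos hpos (by linarith) (by linarith)
    rw [norm_smul, norm_of_nonpos (by linarith), neg_sub]
    exact mul_le_mul_of_nonneg_left (hM s (Ioc_subset_Icc_self hs)) (by linarith)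
  have hint := fun r => intervalIntegrable_sub_rpow (a := a - 1) (by linarith) r 0 t'
  refine (intervalIntegral.norm_integral_le_of_norm_le ht' hbound
    (((hint t').sub (hint t)).mul_const M)).trans ?_
  rw [intervalIntegral.integral_mul_const, intervalIntegral.integral_sub (hint t') (hint t),
    integral_sub_rpow (by linarith), integral_sub_rpow (by linarith)]
  have hmono : t' ^ a ≤ t ^ a := rpow_le_rpow ht' htt ha.le
  simp only [sub_add_cancel, sub_zero, sub_self, zero_rpow ha.ne']
  rw [div_sub_div_same, div_mul_eq_mul_div, mul_comm]
  gcongr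
  linarith [rpow_nonneg (sub_nonneg.2 htt) a]

theorem norm_integral_sub_rpow_smul_sub_le (ha : 0 < a) (ha1 : a ≤ 1) (ht' : 0 ≤ t')
    (htt : t' ≤ t) (hg : ContinuousOn g (Icc 0 t)) (hM : ∀ s ∈ Icc 0 t, ‖g s‖ ≤ M) :
    ‖(∫ s in (0 : ℝ)..t, (t - s) ^ (a - 1) • g s) -
        ∫ s in (0 : ℝ)..t', (t' - s) ^ (a - 1) • g s‖ ≤ 2 * M * (t - t') ^ a / a := by
  have hker : -1 < a - 1 := by linarith
  have hg₁ : ContinuousOn g (uIcc 0 t') := hg.mono (by rw [uIcc_of_le ht']; gcongr)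
  have hg₂ : ContinuousOn g (uIcc t' t) := hg.mono (by rw [uIcc_of_le htt]; gcongr)
  have hint₁ := intervalIntegrable_sub_rpow_smul hker t hg₁
  have hsplit : (∫ s in (0 : ℝ)..t, (t - s) ^ (a - 1) • g s) -
      ∫ s in (0 : ℝ)..t', (t' - s) ^ (a - 1) • g s =
      (∫ s in (0 : ℝ)..t', ((t - s) ^ (a - 1) - (t' - s) ^ (a - 1)) • g s) +
        ∫ s in t'..t, (t - s) ^ (a - 1) • g s := by
    simp_rw [sub_smul]
    rw [← intervalIntegral.integral_add_adjacent_intervals hint₁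
        (intervalIntegrable_sub_rpow_smul hker t hg₂),
      intervalIntegral.integral_sub hint₁ (intervalIntegrable_sub_rpow_smul hker t' hg₁)]
    abel
  rw [hsplit]
  calc _ ≤ M * (t - t') ^ a / a + M * (t - t') ^ a / a :=
        (norm_add_le _ _).trans (add_le_add
          (norm_integral_rpow_sub_rpow_smul_le ha ha1 ht' htt
            fun s hs => hM s ⟨hs.1, hs.2.trans htt⟩)
          (norm_integral_sub_rpow_smul_le ha htt fun s hs => hM s ⟨ht'.trans hs.1, hs.2⟩))
    _ = 2 * M * (t - t') ^ a / a := by ring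

theorem continuousOn_integral_sub_rpow_smul (ha : 0 < a) (ha1 : a ≤ 1)
    (hg : ContinuousOn g (Ici 0)) :
    ContinuousOn (fun t => ∫ s in (0 : ℝ)..t, (t - s) ^ (a - 1) • g s) (Ici 0) := by
  intro t₀ ht₀
  obtain ⟨M, hM⟩ := isCompact_Icc.exists_bound_of_continuousOn
    (hg.mono (Icc_subset_Ici_self : Icc 0 (t₀ + 1) ⊆ _))
  have hnear : ∀ᶠ t in 𝓝[Ici 0] t₀, t ∈ Icc 0 (t₀ + 1) :=
    Filter.mem_of_superset (inter_mem_nhdsWithin _ (Iio_mem_nhds (lt_add_one t₀)))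
      fun t ht => ⟨ht.1, ht.2.le⟩
  have hholder : ∀ {t t'}, t' ∈ Icc 0 (t₀ + 1) → t ∈ Icc 0 (t₀ + 1) → t' ≤ t →
      ‖(∫ s in (0 : ℝ)..t, (t - s) ^ (a - 1) • g s) -
        ∫ s in (0 : ℝ)..t', (t' - s) ^ (a - 1) • g s‖ ≤ 2 * M * |t - t'| ^ a / a :=
    fun ht' ht htt => by
      rw [abs_of_nonneg (sub_nonneg.2 htt)]
      exact norm_integral_sub_rpow_smul_sub_le ha ha1 ht'.1 htt
        (hg.mono fun s hs => hs.1) fun s hs => hM s ⟨hs.1, hs.2.trans ht.2⟩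
  have hlim : Tendsto (fun t => 2 * M * |t - t₀| ^ a / a) (𝓝[Ici 0] t₀) (𝓝 0) := by
    have : Continuous fun t => 2 * M * |t - t₀| ^ a / a := by
      fun_prop (disch := exact ha.le)
    simpa [zero_rpow ha.ne'] using this.continuousWithinAt.tendsto (s := Ici 0) (x := t₀)
  refine tendsto_iff_norm_sub_tendsto_zero.2 (squeeze_zero_norm' ?_ hlim)
  filter_upwards [hnear] with t ht
  rw [norm_norm]
  rcases le_total t₀ t with h | h
  · exact hholder ⟨ht₀, by linarith⟩ ht h
  · rw [norm_sub_rev, abs_sub_comm]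
    exact hholder ht ⟨ht₀, by linarith⟩ h

/-- Substituting `s ↦ t - s` and extending the range to `(0, ∞)` gives an Euler integral. -/
theorem integral_sub_rpow_mul_exp_le (ha : 0 < a) {lam : ℝ} (hlam : 0 < lam) (ht : 0 ≤ t) :
    ∫ s in (0 : ℝ)..t, (t - s) ^ (a - 1) * exp (lam * s) ≤
      Gamma a * lam ^ (-a) * exp (lam * t) := by
  have hker : -1 < a - 1 := by linarith
  have hsubst : ∫ s in (0 : ℝ)..t, (t - s) ^ (a - 1) * exp (lam * s) =
      (∫ u in (0 : ℝ)..t, u ^ (a - 1) * exp (-(lam * u))) * exp (lam * t) := by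
    rw [← intervalIntegral.integral_mul_const]
    have := intervalIntegral.integral_comp_sub_left
      (fun u => u ^ (a - 1) * exp (-(lam * u)) * exp (lam * t)) t (a := 0) (b := t)
    simp only [sub_self, sub_zero] at this
    rw [← this]
    refine intervalIntegral.integral_congr fun s _ => ?_
    rw [mul_assoc, ← exp_add]
    ring_nf
  have hEuler : ∫ u in Ioi (0 : ℝ), u ^ (a - 1) * exp (-(lam * u)) = Gamma a * lam ^ (-a) := by
    have := integral_rpow_mul_exp_neg_mul_rpow (p := 1) (q := a - 1) zero_lt_one hker hlam
    simp only [rpow_one, neg_mul] at this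
    rw [this]
    norm_num
    ring
  have hint : IntegrableOn (fun u : ℝ => u ^ (a - 1) * exp (-(lam * u))) (Ioi 0) := by
    simpa [rpow_one, neg_mul] using
      integrableOn_rpow_mul_exp_neg_mul_rpow (p := 1) hker zero_lt_one hlam
  rw [hsubst, ← hEuler]
  gcongr
  rw [intervalIntegral.integral_of_le ht]
  refine setIntegral_mono_set hint ?_ Ioc_subset_Ioi_self.eventuallyLE
  filter_upwards [ae_restrict_mem measurableSet_Ioi] with u hu
  exact mul_nonneg (rpow_nonneg (le_of_lt hu) _) (exp_pos _).le

end Kernel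

section RiemannLiouville

variable {E : Type*} [NormedAddCommGroup E] [NormedSpace ℝ E] {a t : ℝ} {g h : ℝ → E}

noncomputable def riemannLiouville (a : ℝ) (g : ℝ → E) (t : ℝ) : E :=
  (Gamma a)⁻¹ • ∫ s in (0 : ℝ)..t, (t - s) ^ (a - 1) • g s

theorem continuousOn_riemannLiouville (ha : 0 < a) (ha1 : a ≤ 1) (hg : ContinuousOn g (Ici 0)) :
    ContinuousOn (riemannLiouville a g) (Ici 0) :=
  (continuousOn_integral_sub_rpow_smul ha ha1 hg).const_smul _

theorem riemannLiouville_sub (ha : 0 < a) (hg : ContinuousOn g (uIcc 0 t))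
    (hh : ContinuousOn h (uIcc 0 t)) :
    riemannLiouville a g t - riemannLiouville a h t = riemannLiouville a (g - h) t := by
  have hker : -1 < a - 1 := by linarith
  simp only [riemannLiouville, Pi.sub_apply, smul_sub]
  rw [intervalIntegral.integral_sub (intervalIntegrable_sub_rpow_smul hker t hg)
    (intervalIntegrable_sub_rpow_smul hker t hh), smul_sub]

theorem norm_riemannLiouville_le {lam C : ℝ} (ha : 0 < a) (hlam : 0 < lam) (ht : 0 ≤ t)
    (hg : ∀ s ∈ Icc 0 t, ‖g s‖ ≤ C * exp (lam * s)) :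
    ‖riemannLiouville a g t‖ ≤ lam ^ (-a) * C * exp (lam * t) := by
  have hC : 0 ≤ C := by simpa using (norm_nonneg _).trans (hg 0 ⟨le_rfl, ht⟩)
  have hbound : ∀ᵐ s, s ∈ Ioc 0 t →
      ‖(t - s) ^ (a - 1) • g s‖ ≤ C * ((t - s) ^ (a - 1) * exp (lam * s)) :=
    ae_of_all _ fun s hs => by
      rw [norm_smul, norm_of_nonneg (rpow_nonneg (by linarith [hs.2]) _), mul_left_comm]
      exact mul_le_mul_of_nonneg_left (hg s (Ioc_subset_Icc_self hs))
        (rpow_nonneg (by linarith [hs.2]) _)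
  have hint : IntervalIntegrable (fun s => C * ((t - s) ^ (a - 1) * exp (lam * s))) volume 0 t :=
    ((intervalIntegrable_sub_rpow (by linarith) t 0 t).mul_continuousOn
      (by fun_prop)).const_mul C
  have hΓ : 0 < Gamma a := Gamma_pos_of_pos ha
  rw [riemannLiouville, norm_smul, norm_inv, norm_of_nonneg hΓ.le, inv_mul_le_iff₀ hΓ]
  calc _ ≤ C * ∫ s in (0 : ℝ)..t, (t - s) ^ (a - 1) * exp (lam * s) := by
        rw [← intervalIntegral.integral_const_mul]
        exact intervalIntegral.norm_integral_le_of_norm_le ht hbound hint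
    _ ≤ C * (Gamma a * lam ^ (-a) * exp (lam * t)) :=
        mul_le_mul_of_nonneg_left (integral_sub_rpow_mul_exp_le ha hlam ht) hC
    _ = _ := by ring

end RiemannLiouville

section BieleckiContraction

variable {E : Type*} [NormedAddCommGroup E] {P : (ℝ → E) → ℝ → E} {lam q : ℝ}

/-- `P` contracts, with ratio `q`, the Bielecki seminorm `sup_{s ∈ [0, t]} e^{-λ s} ‖u s‖` on
every interval `[0, t]`; in particular `P u t` only depends on `u` restricted to `[0, t]`. -/
def IsBieleckiContraction (P : (ℝ → E) → ℝ → E) (lam q : ℝ) : Prop :=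
  ∀ u v : ℝ → E, ContinuousOn u (Ici 0) → ContinuousOn v (Ici 0) → ∀ B t : ℝ, 0 ≤ B → 0 ≤ t →
    (∀ s ∈ Icc 0 t, ‖u s - v s‖ ≤ B * exp (lam * s)) → ‖P u t - P v t‖ ≤ q * B * exp (lam * t)

theorem continuousOn_iterate (hPc : ∀ u, ContinuousOn u (Ici 0) → ContinuousOn (P u) (Ici 0))
    {u : ℝ → E} (hu : ContinuousOn u (Ici 0)) (n : ℕ) : ContinuousOn (P^[n] u) (Ici 0) := by
  induction n with
  | zero => exact hu
  | succ n ih => rw [Function.iterate_succ_apply']; exact hPc _ ih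

namespace IsBieleckiContraction

theorem eqOn_of_isFixedPt (hP : IsBieleckiContraction P lam q) (hq : q < 1) {x y : ℝ → E}
    (hx : ContinuousOn x (Ici 0)) (hy : ContinuousOn y (Ici 0)) (hPx : EqOn (P x) x (Ici 0))
    (hPy : EqOn (P y) y (Ici 0)) : EqOn y x (Ici 0) := by
  intro t ht
  obtain ⟨s₀, hs₀, hmax⟩ := isCompact_Icc.exists_isMaxOn (nonempty_Icc.2 ht)
    ((by fun_prop : Continuous fun s => exp (-(lam * s))).continuousOn.mul
      ((hy.sub hx).norm.mono Icc_subset_Ici_self))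
  set D := exp (-(lam * s₀)) * ‖y s₀ - x s₀‖
  have hbound : ∀ s ∈ Icc 0 t, ‖y s - x s‖ ≤ D * exp (lam * s) := fun s hs => by
    have : exp (-(lam * s)) * ‖y s - x s‖ ≤ D := hmax hs
    rwa [exp_neg, inv_mul_le_iff₀ (exp_pos _), mul_comm] at this
  have hD : D ≤ q * D := by
    have hcontr := hP y x hy hx D s₀ (by positivity) hs₀.1
      fun s hs => hbound s ⟨hs.1, hs.2.trans hs₀.2⟩
    rw [hPy hs₀.1, hPx hs₀.1] at hcontr
    calc D ≤ exp (-(lam * s₀)) * (q * D * exp (lam * s₀)) :=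
          mul_le_mul_of_nonneg_left hcontr (exp_pos _).le
      _ = q * D := by rw [exp_neg]; field_simp
  have hD0 : D = 0 := by nlinarith [show 0 ≤ D by positivity]
  simpa [hD0, sub_eq_zero] using hbound t ⟨ht, le_rfl⟩

theorem norm_iterate_succ_sub_le (hP : IsBieleckiContraction P lam q)
    (hPc : ∀ u, ContinuousOn u (Ici 0) → ContinuousOn (P u) (Ici 0)) (hq : 0 ≤ q)
    {u : ℝ → E} (hu : ContinuousOn u (Ici 0)) {B T : ℝ} (hB : 0 ≤ B)
    (h : ∀ s ∈ Icc 0 T, ‖P u s - u s‖ ≤ B * exp (lam * s)) (n : ℕ) :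
    ∀ t ∈ Icc 0 T, ‖P^[n + 1] u t - P^[n] u t‖ ≤ q ^ n * B * exp (lam * t) := by
  induction n with
  | zero => simpa using h
  | succ n ih =>
    intro t ht
    have hcontr := hP _ _ (continuousOn_iterate hPc hu (n + 1)) (continuousOn_iterate hPc hu n)
      (q ^ n * B) t (by positivity) ht.1 fun s hs => ih s ⟨hs.1, hs.2.trans ht.2⟩
    rw [← Function.iterate_succ_apply' P, ← Function.iterate_succ_apply' P] at hcontr
    convert hcontr using 1
    ring

theorem exists_norm_iterate_succ_sub_le (hP : IsBieleckiContraction P lam q)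
    (hPc : ∀ u, ContinuousOn u (Ici 0) → ContinuousOn (P u) (Ici 0)) (hlam : 0 ≤ lam)
    (hq : 0 ≤ q) {u : ℝ → E} (hu : ContinuousOn u (Ici 0)) (T : ℝ) :
    ∃ C, ∀ n, ∀ t ∈ Icc 0 T, ‖P^[n + 1] u t - P^[n] u t‖ ≤ C * q ^ n := by
  obtain ⟨M, hM⟩ := isCompact_Icc.exists_bound_of_continuousOn
    (((hPc u hu).sub hu).mono (Icc_subset_Ici_self : Icc 0 T ⊆ _))
  have hstart : ∀ s ∈ Icc 0 T, ‖P u s - u s‖ ≤ max M 0 * exp (lam * s) := fun s hs =>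
    (hM s hs).trans ((le_max_left _ _).trans
      (le_mul_of_one_le_right (le_max_right _ _) (one_le_exp (by nlinarith [hs.1]))))
  refine ⟨max M 0 * exp (lam * T), fun n t ht => ?_⟩
  calc _ ≤ q ^ n * max M 0 * exp (lam * t) :=
        norm_iterate_succ_sub_le hP hPc hq hu (le_max_right _ _) hstart n t ht
    _ ≤ q ^ n * max M 0 * exp (lam * T) := by gcongr; exact ht.2
    _ = _ := by ring

theorem tendsto_apply_of_tendstoUniformlyOn (hP : IsBieleckiContraction P lam q)
    (hlam : 0 ≤ lam) {ι : Type*} {l : Filter ι} {X : ι → ℝ → E} {x : ℝ → E}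
    (hX : ∀ n, ContinuousOn (X n) (Ici 0)) (hx : ContinuousOn x (Ici 0)) {t : ℝ} (ht : 0 ≤ t)
    (hXx : TendstoUniformlyOn X x l (Icc 0 t)) : Tendsto (fun n => P (X n) t) l (𝓝 (P x t)) := by
  rw [Metric.tendsto_nhds]
  intro ε hε
  set K := (|q| + 1) * exp (lam * t)
  have hK : 0 < K := by positivity
  filter_upwards [Metric.tendstoUniformlyOn_iff.1 hXx (ε / K) (by positivity)] with n hn
  have hcontr := hP _ _ (hX n) hx (ε / K) t (by positivity) ht fun s hs => by
    rw [← dist_eq_norm, dist_comm]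
    exact (hn s hs).le.trans (le_mul_of_one_le_right (by positivity)
      (one_le_exp (by nlinarith [hs.1])))
  rw [dist_eq_norm]
  calc _ ≤ q * (ε / K) * exp (lam * t) := hcontr
    _ ≤ |q| * (ε / K) * exp (lam * t) := by gcongr; exact le_abs_self q
    _ = |q| / (|q| + 1) * ε := by simp only [K]; field_simp
    _ < ε := by
      rw [div_mul_eq_mul_div, div_lt_iff₀ (by positivity)]
      nlinarith

theorem exists_continuousOn_isFixedPt [CompleteSpace E] (hP : IsBieleckiContraction P lam q)
    (hPc : ∀ u, ContinuousOn u (Ici 0) → ContinuousOn (P u) (Ici 0)) (hlam : 0 ≤ lam)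
    (hq0 : 0 ≤ q) (hq1 : q < 1) : ∃ x, ContinuousOn x (Ici 0) ∧ EqOn (P x) x (Ici 0) := by
  set X : ℕ → ℝ → E := fun n => P^[n] 0
  have hXc : ∀ n, ContinuousOn (X n) (Ici 0) := continuousOn_iterate hPc continuousOn_const
  set x : ℝ → E := fun t => ∑' n, (X (n + 1) t - X n t)
  -- `X 0 = 0`, so `x` is the limit of the telescoping sums `X N`.
  have hXx : ∀ T, TendstoUniformlyOn X x atTop (Icc 0 T) := fun T => by
    obtain ⟨C, hC⟩ := exists_norm_iterate_succ_sub_le hP hPc hlam hq0 continuousOn_const T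
    refine (tendstoUniformlyOn_tsum_nat ((summable_geometric_of_lt_one hq0 hq1).mul_left C)
      fun n t ht => hC n t ht).congr (Eventually.of_forall fun N t _ => ?_)
    change ∑ n ∈ Finset.range N, (X (n + 1) t - X n t) = X N t
    rw [Finset.sum_range_sub (fun n => X n t)]
    simp [X]
  have hx : ContinuousOn x (Ici 0) := continuousOn_of_locally_continuousOn fun t₀ _ =>
    ⟨Iio (t₀ + 1), isOpen_Iio, lt_add_one t₀,
      ((hXx (t₀ + 1)).continuousOn (Frequently.of_forall fun n =>
        (hXc n).mono Icc_subset_Ici_self)).mono fun s hs => ⟨hs.1, hs.2.le⟩⟩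
  refine ⟨x, hx, fun t ht => tendsto_nhds_unique ?_
    (((hXx t).tendsto_at ⟨ht, le_rfl⟩).comp (tendsto_add_atTop_nat 1))⟩
  simp only [Function.comp_def, X, Function.iterate_succ_apply']
  exact hP.tendsto_apply_of_tendstoUniformlyOn hlam hXc hx ht (hXx t)

end IsBieleckiContraction

end BieleckiContraction

theorem exists_pos_forall_mul_rpow_neg_le {ι : Type*} [Finite ι] {α : ι → ℝ}
    (hα : ∀ i, 0 < α i) (L : ℝ) {q : ℝ} (hq : 0 < q) :
    ∃ lam, 0 < lam ∧ ∀ i, L * lam ^ (-α i) ≤ q :=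
  ((eventually_gt_atTop 0).and (eventually_all.2 fun i =>
    ((tendsto_rpow_neg_atTop (hα i)).const_mul L).eventually
      (ge_mem_nhds (by rwa [mul_zero])))).exists

theorem continuousOn_apply_apply {ι E : Type*} [TopologicalSpace E]
    {f : ℝ → (ι → E) → ι → E} (hf : ContinuousOn (fun p : ℝ × (ι → E) => f p.1 p.2)
    (Ici 0 ×ˢ univ)) {x : ℝ → ι → E} (hx : ContinuousOn x (Ici 0)) (i : ι) :
    ContinuousOn (fun s => f s (x s) i) (Ici 0) :=
  (continuous_apply i).comp_continuousOn
    (hf.comp (continuousOn_id.prodMk hx) fun _ hs => ⟨hs, mem_univ _⟩)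

section Volterra

variable {ι E : Type*} [NormedAddCommGroup E] [NormedSpace ℝ E]
  {α : ι → ℝ} {f : ℝ → (ι → E) → ι → E} {x₀ : ι → E}

noncomputable def volterraOp (α : ι → ℝ) (f : ℝ → (ι → E) → ι → E) (x₀ : ι → E)
    (x : ℝ → ι → E) (t : ℝ) : ι → E :=
  fun i => x₀ i + riemannLiouville (α i) (fun s => f s (x s) i) t

theorem continuousOn_volterraOp (hα : ∀ i, α i ∈ Ioc 0 1)
    (hf : ContinuousOn (fun p : ℝ × (ι → E) => f p.1 p.2) (Ici 0 ×ˢ univ))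
    {x : ℝ → ι → E} (hx : ContinuousOn x (Ici 0)) :
    ContinuousOn (volterraOp α f x₀ x) (Ici 0) :=
  continuousOn_pi.2 fun i => continuousOn_const.add
    (continuousOn_riemannLiouville (hα i).1 (hα i).2 (continuousOn_apply_apply hf hx i))

theorem isBieleckiContraction_volterraOp [Fintype ι] (hα : ∀ i, 0 < α i)
    (hf : ContinuousOn (fun p : ℝ × (ι → E) => f p.1 p.2) (Ici 0 ×ˢ univ)) {L : ℝ} (hL : 0 ≤ L)
    (hLip : ∀ i, ∀ t ∈ Ici (0 : ℝ), ∀ y z : ι → E, ‖f t y i - f t z i‖ ≤ L * ‖y - z‖)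
    {lam q : ℝ} (hlam : 0 < lam) (hq0 : 0 ≤ q) (hq : ∀ i, L * lam ^ (-α i) ≤ q) :
    IsBieleckiContraction (volterraOp α f x₀) lam q := by
  intro u v hu hv B t hB ht huv
  rw [pi_norm_le_iff_of_nonneg (by positivity)]
  intro i
  have hIcc : uIcc 0 t ⊆ Ici 0 := by rw [uIcc_of_le ht]; exact Icc_subset_Ici_self
  simp only [volterraOp, Pi.sub_apply, add_sub_add_left_eq_sub]
  rw [riemannLiouville_sub (hα i) ((continuousOn_apply_apply hf hu i).mono hIcc)
    ((continuousOn_apply_apply hf hv i).mono hIcc)]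
  calc _ ≤ lam ^ (-α i) * (L * B) * exp (lam * t) :=
        norm_riemannLiouville_le (hα i) hlam ht fun s hs =>
          calc ‖f s (u s) i - f s (v s) i‖ ≤ L * ‖u s - v s‖ := hLip i s hs.1 _ _
            _ ≤ L * (B * exp (lam * s)) := by gcongr; exact huv s hs
            _ = L * B * exp (lam * s) := by ring
    _ = L * lam ^ (-α i) * B * exp (lam * t) := by ring
    _ ≤ q * B * exp (lam * t) := by gcongr; exact hq i

end Volterra

theorem stmt_2_general
    (d : ℕ)
    (α : Fin d → ℝ) (hα : ∀ i, α i ∈ Set.Ioc (0 : ℝ) 1)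
    (f : ℝ → (Fin d → ℂ) → (Fin d → ℂ))
    (hf : ContinuousOn (fun p : ℝ × (Fin d → ℂ) => f p.1 p.2)
        (Set.Ici 0 ×ˢ Set.univ))
    (L : ℝ) (hL : 0 < L)
    (hLip : ∀ i, ∀ t ∈ Set.Ici (0 : ℝ), ∀ y z : Fin d → ℂ,
        ‖f t y i - f t z i‖ ≤ L * ‖y - z‖)
    (x₀ : Fin d → ℂ) :
    ∃ x : ℝ → (Fin d → ℂ),
      (ContinuousOn x (Set.Ici 0) ∧
        ∀ t ∈ Set.Ici (0 : ℝ), ∀ i : Fin d,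
          x t i = x₀ i + (Real.Gamma (α i))⁻¹ •
            ∫ s in (0 : ℝ)..t, ((t - s) ^ (α i - 1) : ℝ) • f s (x s) i) ∧
      ∀ y : ℝ → (Fin d → ℂ),
        (ContinuousOn y (Set.Ici 0) ∧
          ∀ t ∈ Set.Ici (0 : ℝ), ∀ i : Fin d,
            y t i = x₀ i + (Real.Gamma (α i))⁻¹ •
              ∫ s in (0 : ℝ)..t, ((t - s) ^ (α i - 1) : ℝ) • f s (y s) i) →
        Set.EqOn y x (Set.Ici 0) := by
  have hα0 : ∀ i, 0 < α i := fun i => (hα i).1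
  obtain ⟨lam, hlam, hLlam⟩ := exists_pos_forall_mul_rpow_neg_le hα0 L one_half_pos
  have hP : IsBieleckiContraction (volterraOp α f x₀) lam (1 / 2) :=
    isBieleckiContraction_volterraOp hα0 hf hL.le hLip hlam one_half_pos.le hLlam
  have hPc := fun u (hu : ContinuousOn u (Ici 0)) =>
    continuousOn_volterraOp (x₀ := x₀) hα hf hu
  obtain ⟨x, hx, hPx⟩ :=
    hP.exists_continuousOn_isFixedPt hPc hlam.le one_half_pos.le one_half_lt_one
  refine ⟨x, ⟨hx, fun t ht i => (congrFun (hPx ht) i).symm⟩, fun y ⟨hy, hPy⟩ => ?_⟩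
  exact hP.eqOn_of_isFixedPt one_half_lt_one hx hy hPx fun t ht =>
    funext fun i => (hPy t ht i).symm

theorem stmt_2
    (d : ℕ) (hd : 1 ≤ d)
    (α : Fin d → ℝ) (hα : ∀ i, α i ∈ Set.Ioc (0 : ℝ) 1)
    (f : ℝ → (Fin d → ℂ) → (Fin d → ℂ))
    (hf : ContinuousOn (fun p : ℝ × (Fin d → ℂ) => f p.1 p.2)
        (Set.Ici 0 ×ˢ Set.univ))
    (L : ℝ) (hL : 0 < L)
    (hLip : ∀ i, ∀ t ∈ Set.Ici (0 : ℝ), ∀ y z : Fin d → ℂ,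
        ‖f t y i - f t z i‖ ≤ L * ‖y - z‖)
    (x₀ : Fin d → ℂ) :
    ∃ x : ℝ → (Fin d → ℂ),
      (ContinuousOn x (Set.Ici 0) ∧
        ∀ t ∈ Set.Ici (0 : ℝ), ∀ i : Fin d,
          x t i = x₀ i + (Real.Gamma (α i))⁻¹ •
            ∫ s in (0 : ℝ)..t, ((t - s) ^ (α i - 1) : ℝ) • f s (x s) i) ∧
      ∀ y : ℝ → (Fin d → ℂ),
        (ContinuousOn y (Set.Ici 0) ∧
          ∀ t ∈ Set.Ici (0 : ℝ), ∀ i : Fin d,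
            y t i = x₀ i + (Real.Gamma (α i))⁻¹ •
              ∫ s in (0 : ℝ)..t, ((t - s) ^ (α i - 1) : ℝ) • f s (y s) i) →
        Set.EqOn y x (Set.Ici 0) :=
  stmt_2_general d α hα f hf L hL hLip x₀
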